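/- The map Φ_b sending a blue arrow (i,j) ∈ N_b (with i ∈ D, j ∈ U_D, 0 ≤ g(j)−g(i) < a, and j strictly northwest of i) to the cell c at the intersection of the row of i and the column of j is a bijection from N_b onto the set D_b = {c ∈ D : (leg_D(c)+1)/arm_D(c) ≤ a/b} of blue cells (where the inequality is interpreted as b(leg_D(c)+1) ≤ a·arm_D(c), with the convention that it fails when arm_D(c) = 0). -/

import Mathlib

def g (a b : ℤ) (p : ℤ × ℤ) : ℤ := a * b - a * p.1 - b * p.2

def Gset (a b : ℤ) : Set (ℤ × ℤ) := {p | 1 ≤ p.1 ∧ 1 ≤ p.2 ∧ 0 < g a b p}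

def IsSubdiagram (a b : ℤ) (D : Set (ℤ × ℤ)) : Prop :=
  D ⊆ Gset a b ∧ ∀ p ∈ D, ∀ q ∈ Gset a b, q.1 ≤ p.1 → q.2 ≤ p.2 → q ∈ D

def U (D : Set (ℤ × ℤ)) : Set (ℤ × ℤ) :=
  {p | p ∉ D ∧ ((p.1, p.2 - 1) ∈ D ∨ (1 ≤ p.1 ∧ p.2 - 1 ≤ 0))}

/-- arm_D(c) = max {k : c − ka ∈ D}, where a acts as the vector (−1,0). -/
noncomputable def arm (D : Set (ℤ × ℤ)) (c : ℤ × ℤ) : ℕ :=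
  sSup {k : ℕ | (c.1 + (k : ℤ), c.2) ∈ D}

/-- leg_D(c) = max {k : c − kb ∈ D}, where b acts as the vector (0,−1). -/
noncomputable def leg (D : Set (ℤ × ℤ)) (c : ℤ × ℤ) : ℕ :=
  sSup {k : ℕ | (c.1, c.2 + (k : ℤ)) ∈ D}

/-!
The arrow `(i, j)` is recovered from its image `c = (j.1, i.2)`: `j` is the cell of `U D` on top
of the column of `c`, so `j.2 = c.2 + leg D c + 1`, and `i` lies in the row of `c` with
`a * (i.1 - c.1) = b * (leg D c + 1) + (g j - g i)`. The window `0 ≤ g j - g i < a` thus pins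
`i.1 - c.1` down to `⌈b (leg D c + 1) / a⌉`, and such a cell exists in the row of `c` exactly when
this ceiling is at most `arm D c`, i.e. when `b (leg D c + 1) ≤ a * arm D c`.
-/

lemma Nat.mem_iff_le_sSup_of_forall_le_mem {S : Set ℕ} (hS : BddAbove S) (hne : S.Nonempty)
    (hdown : ∀ m ∈ S, ∀ k ≤ m, k ∈ S) {k : ℕ} : k ∈ S ↔ k ≤ sSup S :=
  ⟨fun hk => le_csSup hS hk, fun hk => hdown _ (Nat.sSup_mem hne hS) k hk⟩

lemma Int.exists_mul_mem_Ico {a : ℤ} (ha : 0 < a) (n : ℤ) : ∃ m, n ≤ a * m ∧ a * m < n + a := by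
  refine ⟨-((-n) / a), ?_, ?_⟩
  · linarith [Int.ediv_mul_le (-n) ha.ne']
  · linarith [Int.lt_ediv_add_one_mul_self (-n) ha]

lemma g_sub_g (a b : ℤ) (p q : ℤ × ℤ) : g a b q - g a b p = a * (p.1 - q.1) - b * (q.2 - p.2) := by
  simp only [g]; ring

section Subdiagram

variable {a b : ℤ} {D : Set (ℤ × ℤ)}

lemma Gset.fst_lt (ha : 0 < a) (hb : 0 ≤ b) {p : ℤ × ℤ} (hp : p ∈ Gset a b) : p.1 < b := by
  obtain ⟨h1, h2, hg⟩ := hp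
  simp only [g] at hg
  nlinarith

lemma Gset.snd_lt (ha : 0 ≤ a) (hb : 0 < b) {p : ℤ × ℤ} (hp : p ∈ Gset a b) : p.2 < a := by
  obtain ⟨h1, h2, hg⟩ := hp
  simp only [g] at hg
  nlinarith

lemma IsSubdiagram.mem_of_le (ha : 0 ≤ a) (hb : 0 ≤ b) (hD : IsSubdiagram a b D)
    {p q : ℤ × ℤ} (hp : p ∈ D) (hq₁ : 1 ≤ q.1) (hq₂ : 1 ≤ q.2) (h₁ : q.1 ≤ p.1)
    (h₂ : q.2 ≤ p.2) : q ∈ D := by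
  refine hD.2 p hp q ⟨hq₁, hq₂, ?_⟩ h₁ h₂
  have hg := (hD.1 hp).2.2
  simp only [g] at hg ⊢
  nlinarith

lemma IsSubdiagram.add_mem_iff_le_arm (ha : 0 < a) (hb : 0 ≤ b) (hD : IsSubdiagram a b D)
    {c : ℤ × ℤ} (hc : c ∈ D) {k : ℤ} (hk : 0 ≤ k) : (c.1 + k, c.2) ∈ D ↔ k ≤ arm D c := by
  lift k to ℕ using hk
  have hbdd : BddAbove {k : ℕ | (c.1 + (k : ℤ), c.2) ∈ D} :=
    ⟨(b - c.1).toNat, fun k hk => by have := Gset.fst_lt ha hb (hD.1 hk); dsimp only at this; omega⟩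
  have hdown : ∀ m ∈ {k : ℕ | (c.1 + (k : ℤ), c.2) ∈ D}, ∀ k ≤ m, (c.1 + (k : ℤ), c.2) ∈ D :=
    fun m hm k hkm => hD.mem_of_le ha.le hb hm (by dsimp only; linarith [(hD.1 hc).1])
      (hD.1 hc).2.1 (by dsimp only; omega) le_rfl
  rw [Nat.cast_le]
  exact Nat.mem_iff_le_sSup_of_forall_le_mem hbdd ⟨0, by simpa using hc⟩ hdown

lemma IsSubdiagram.add_mem_iff_le_leg (ha : 0 ≤ a) (hb : 0 < b) (hD : IsSubdiagram a b D)
    {c : ℤ × ℤ} (hc : c ∈ D) {k : ℤ} (hk : 0 ≤ k) : (c.1, c.2 + k) ∈ D ↔ k ≤ leg D c := by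
  lift k to ℕ using hk
  have hbdd : BddAbove {k : ℕ | (c.1, c.2 + (k : ℤ)) ∈ D} :=
    ⟨(a - c.2).toNat, fun k hk => by have := Gset.snd_lt ha hb (hD.1 hk); dsimp only at this; omega⟩
  have hdown : ∀ m ∈ {k : ℕ | (c.1, c.2 + (k : ℤ)) ∈ D}, ∀ k ≤ m, (c.1, c.2 + (k : ℤ)) ∈ D :=
    fun m hm k hkm => hD.mem_of_le ha hb.le hm (hD.1 hc).1
      (by dsimp only; linarith [(hD.1 hc).2.1]) le_rfl (by dsimp only; omega)
  rw [Nat.cast_le]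
  exact Nat.mem_iff_le_sSup_of_forall_le_mem hbdd ⟨0, by simpa using hc⟩ hdown

lemma IsSubdiagram.top_mem_U (ha : 0 ≤ a) (hb : 0 < b) (hD : IsSubdiagram a b D)
    {c : ℤ × ℤ} (hc : c ∈ D) : (c.1, c.2 + leg D c + 1) ∈ U D := by
  refine ⟨fun hmem => ?_, Or.inl ?_⟩
  · have := (hD.add_mem_iff_le_leg ha hb hc (k := leg D c + 1) (by omega)).1
      (by simpa [add_assoc] using hmem)
    omega
  · simpa using (hD.add_mem_iff_le_leg ha hb hc (Nat.cast_nonneg _)).2 le_rfl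

lemma IsSubdiagram.leg_eq_of_mem_U (ha : 0 ≤ a) (hb : 0 < b) (hD : IsSubdiagram a b D)
    {c j : ℤ × ℤ} (hc : c ∈ D) (hj : j ∈ U D) (h₁ : j.1 = c.1) (h₂ : c.2 < j.2) :
    (leg D c : ℤ) = j.2 - c.2 - 1 := by
  obtain ⟨jx, jy⟩ := j
  dsimp only at h₁ h₂
  subst h₁
  have hbelow : (c.1, jy - 1) ∈ D :=
    hj.2.resolve_right fun h => by linarith [h.2, (hD.1 hc).2.1]
  have hle := (hD.add_mem_iff_le_leg ha hb hc (k := jy - 1 - c.2) (by omega)).1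
    (by simpa using hbelow)
  have hlt : ¬ jy - c.2 ≤ leg D c := fun h =>
    hj.1 (by simpa using (hD.add_mem_iff_le_leg ha hb hc (by omega)).2 h)
  omega

lemma IsSubdiagram.mem_of_mem_U (ha : 0 ≤ a) (hb : 0 ≤ b) (hD : IsSubdiagram a b D)
    {i j : ℤ × ℤ} (hi : i ∈ D) (hj : j ∈ U D) (h : i.2 < j.2) : (j.1, i.2) ∈ D := by
  have hbelow : (j.1, j.2 - 1) ∈ D :=
    hj.2.resolve_right fun h => by linarith [h.2, (hD.1 hi).2.1]
  exact hD.mem_of_le ha hb hbelow (hD.1 hbelow).1 (hD.1 hi).2.1 le_rfl (by dsimp only; omega)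

end Subdiagram

def blueArrows (a b : ℤ) (D : Set (ℤ × ℤ)) : Set ((ℤ × ℤ) × (ℤ × ℤ)) :=
  {p | p.1 ∈ D ∧ p.2 ∈ U D ∧ 0 ≤ g a b p.2 - g a b p.1 ∧ g a b p.2 - g a b p.1 < a ∧
    p.2.1 < p.1.1 ∧ p.1.2 < p.2.2}

def blueCells (a b : ℤ) (D : Set (ℤ × ℤ)) : Set (ℤ × ℤ) :=
  {c | c ∈ D ∧ b * ((leg D c : ℤ) + 1) ≤ a * (arm D c : ℤ)}

/-- `Φ_b`: the cell in the column of `j` and the row of `i`. -/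
def arrowCell (p : (ℤ × ℤ) × (ℤ × ℤ)) : ℤ × ℤ := (p.2.1, p.1.2)

section BlueArrows

variable {a b : ℤ} {D : Set (ℤ × ℤ)}

lemma IsSubdiagram.arrowCell_mem_and_leg_eq (ha : 0 ≤ a) (hb : 0 < b) (hD : IsSubdiagram a b D)
    {p : (ℤ × ℤ) × (ℤ × ℤ)} (hp : p ∈ blueArrows a b D) :
    arrowCell p ∈ D ∧ (leg D (arrowCell p) : ℤ) = p.2.2 - p.1.2 - 1 := by
  obtain ⟨hi, hj, -, -, -, hy⟩ := hp
  have hc := hD.mem_of_mem_U ha hb.le hi hj hy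
  exact ⟨hc, hD.leg_eq_of_mem_U ha hb hc hj rfl hy⟩

lemma IsSubdiagram.mapsTo_arrowCell (ha : 0 < a) (hb : 0 < b) (hD : IsSubdiagram a b D) :
    Set.MapsTo arrowCell (blueArrows a b D) (blueCells a b D) := by
  rintro ⟨i, j⟩ hp
  obtain ⟨hc, hleg⟩ := hD.arrowCell_mem_and_leg_eq ha.le hb hp
  obtain ⟨hi, -, hg, -, hx, -⟩ := hp
  have harm : i.1 - j.1 ≤ arm D (j.1, i.2) :=
    (hD.add_mem_iff_le_arm ha hb.le hc (by dsimp only at hx; omega)).1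
      (by simpa [arrowCell] using hi)
  refine ⟨hc, ?_⟩
  rw [g_sub_g] at hg
  dsimp only [arrowCell] at hleg ⊢
  rw [hleg]
  nlinarith

lemma IsSubdiagram.injOn_arrowCell (ha : 0 < a) (hb : 0 < b) (hD : IsSubdiagram a b D) :
    Set.InjOn arrowCell (blueArrows a b D) := by
  rintro ⟨⟨ix, iy⟩, ⟨jx, jy⟩⟩ hp ⟨⟨ix', iy'⟩, ⟨jx', jy'⟩⟩ hp' heq
  have hleg := (hD.arrowCell_mem_and_leg_eq ha.le hb hp).2
  have hleg' := (hD.arrowCell_mem_and_leg_eq ha.le hb hp').2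
  simp only [arrowCell, Prod.mk.injEq] at heq hleg hleg'
  obtain ⟨rfl, rfl⟩ := heq
  obtain rfl : jy = jy' := by omega
  obtain ⟨-, -, hg, hga, -⟩ := hp
  obtain ⟨-, -, hg', hga', -⟩ := hp'
  simp only [g_sub_g] at hg hga hg' hga'
  -- `a * (ix - ix')` is the difference of two values of `g j - g i` in `[0, a)`.
  have hlt : a * (ix - ix') < a * 1 := by linarith
  have hgt : a * (-1) < a * (ix - ix') := by linarith
  have h₁ := lt_of_mul_lt_mul_left hlt ha.le
  have h₂ := lt_of_mul_lt_mul_left hgt ha.le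
  simp only [Prod.mk.injEq, and_true]
  omega

lemma IsSubdiagram.surjOn_arrowCell (ha : 0 < a) (hb : 0 < b) (hD : IsSubdiagram a b D) :
    Set.SurjOn arrowCell (blueArrows a b D) (blueCells a b D) := by
  rintro c ⟨hc, hblue⟩
  obtain ⟨m, hm₁, hm₂⟩ := Int.exists_mul_mem_Ico ha (b * (leg D c + 1))
  have hm : 0 < m := pos_of_mul_pos_right (lt_of_lt_of_le (by positivity) hm₁) ha.le
  have hmarm : m < arm D c + 1 := lt_of_mul_lt_mul_left (by linarith) ha.le
  refine ⟨((c.1 + m, c.2), (c.1, c.2 + leg D c + 1)), ⟨?_, hD.top_mem_U ha.le hb hc, ?_, ?_,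
    by dsimp only; omega, by dsimp only; omega⟩, rfl⟩
  · exact (hD.add_mem_iff_le_arm ha hb.le hc hm.le).2 (by omega)
  all_goals rw [g_sub_g]; dsimp only; linarith

end BlueArrows

theorem stmt7_general (a b : ℤ) (ha : 1 < a) (hab : a < b)
    (D : Set (ℤ × ℤ)) (hD : IsSubdiagram a b D) :
    Set.BijOn (fun p : (ℤ × ℤ) × (ℤ × ℤ) => (p.2.1, p.1.2))
      {p : (ℤ × ℤ) × (ℤ × ℤ) | p.1 ∈ D ∧ p.2 ∈ U D ∧
        0 ≤ g a b p.2 - g a b p.1 ∧ g a b p.2 - g a b p.1 < a ∧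
        p.2.1 < p.1.1 ∧ p.1.2 < p.2.2}
      {c : ℤ × ℤ | c ∈ D ∧ b * ((leg D c : ℤ) + 1) ≤ a * (arm D c : ℤ)} := by
  have ha₀ : 0 < a := by omega
  have hb₀ : 0 < b := by omega
  exact ⟨hD.mapsTo_arrowCell ha₀ hb₀, hD.injOn_arrowCell ha₀ hb₀, hD.surjOn_arrowCell ha₀ hb₀⟩

/-- Φ_b : (i,j) ↦ (column of j, row of i) is a bijection from the
set N_b of blue arrows onto D_b = {c ∈ D : b(leg_D(c)+1) ≤ a·arm_D(c)}. -/
theorem stmt7 (a b : ℤ) (ha : 1 < a) (hab : a < b) (hcop : IsCoprime a b)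
    (D : Set (ℤ × ℤ)) (hD : IsSubdiagram a b D) :
    Set.BijOn (fun p : (ℤ × ℤ) × (ℤ × ℤ) => (p.2.1, p.1.2))
      {p : (ℤ × ℤ) × (ℤ × ℤ) | p.1 ∈ D ∧ p.2 ∈ U D ∧
        0 ≤ g a b p.2 - g a b p.1 ∧ g a b p.2 - g a b p.1 < a ∧
        p.2.1 < p.1.1 ∧ p.1.2 < p.2.2}
      {c : ℤ × ℤ | c ∈ D ∧ b * ((leg D c : ℤ) + 1) ≤ a * (arm D c : ℤ)} :=
  stmt7_general a b ha hab D hD
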